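/- (Example 1) Under the hypotheses of the main theorem, if additionally I(X; Y) = 0 and H(X) = D, then for any α with log₂ V(α) < D, p_α ≥ 1 − 1/(D − log₂ V(α)), where V(α) = Σ_{j=0}^{α} C(D,j). -/
import Mathlib


open Finset

noncomputable section

open scoped Classical

variable {Ω : Type*}

/-- Probability of the event `A` under the mass function `p` on a finite sample space. -/
def pr [Fintype Ω] (p : Ω → ℝ) (A : Ω → Prop) : ℝ :=
  ∑ ω, if A ω then p ω else 0

/-- `p` is a probability mass function on the finite sample space `Ω`. -/
def IsPMF [Fintype Ω] (p : Ω → ℝ) : Prop :=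
  (∀ ω, 0 ≤ p ω) ∧ ∑ ω, p ω = 1

/-- Shannon entropy (in bits) of the random variable `X` under `p`
(with the convention `0 · log 0 = 0` built into `Real.negMulLog`). -/
def ent [Fintype Ω] (p : Ω → ℝ) {S : Type*} [Fintype S] (X : Ω → S) : ℝ :=
  ∑ s, Real.negMulLog (pr p fun ω => X ω = s) / Real.log 2

/-- Conditional Shannon entropy `H(X | Y)` (in bits), via the chain rule
`H(X | Y) = H(X, Y) - H(Y)`. -/
def condEnt [Fintype Ω] (p : Ω → ℝ) {S T : Type*} [Fintype S] [Fintype T]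
    (X : Ω → S) (Y : Ω → T) : ℝ :=
  ent p (fun ω => (X ω, Y ω)) - ent p Y

/-- Mutual information `I(X ; Y)` (in bits). -/
def mutInf [Fintype Ω] (p : Ω → ℝ) {S T : Type*} [Fintype S] [Fintype T]
    (X : Ω → S) (Y : Ω → T) : ℝ :=
  ent p X + ent p Y - ent p fun ω => (X ω, Y ω)

/-- The conditional mass function of `p` given the event `A`
(the zero function if `A` has probability zero). -/
def condPMF [Fintype Ω] (p : Ω → ℝ) (A : Ω → Prop) : Ω → ℝ :=
  fun ω => if A ω then p ω / pr p A else 0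

/-- `X → Y → A` is a Markov chain: `A` is conditionally independent of `X` given `Y`
(stated in multiplied-out form to avoid division). -/
def MarkovChain [Fintype Ω] (p : Ω → ℝ) {S T U : Type*}
    (X : Ω → S) (Y : Ω → T) (A : Ω → U) : Prop :=
  ∀ (x : S) (y : T) (a : U), 0 < pr p (fun ω => X ω = x ∧ Y ω = y) →
    pr p (fun ω => A ω = a ∧ Y ω = y ∧ X ω = x) * pr p (fun ω => Y ω = y) =
      pr p (fun ω => A ω = a ∧ Y ω = y) * pr p (fun ω => X ω = x ∧ Y ω = y)

/-- `V(α) = Σ_{j=0}^{α} C(D, j)`, the size of a Hamming ball of radius `α` in `{0,1}^D`. -/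
def Vball (D α : ℕ) : ℕ :=
  ∑ j ∈ Finset.range (α + 1), D.choose j

/-- The binary entropy function (in bits). -/
def binEnt (q : ℝ) : ℝ :=
  -(q * Real.logb 2 q) - (1 - q) * Real.logb 2 (1 - q)



section Helpers

variable [Fintype Ω] {p : Ω → ℝ}

lemma pr_nonneg (hp : ∀ ω, 0 ≤ p ω) (A : Ω → Prop) : 0 ≤ pr p A :=
  Finset.sum_nonneg fun ω _ => by by_cases h : A ω <;> simp [h, hp ω]

lemma pr_congr {A B : Ω → Prop} (h : ∀ ω, A ω ↔ B ω) : pr p A = pr p B :=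
  Finset.sum_congr rfl fun ω _ => by simp [h ω]

lemma pr_mono (hp : ∀ ω, 0 ≤ p ω) {A B : Ω → Prop} (h : ∀ ω, A ω → B ω) :
    pr p A ≤ pr p B := by
  apply Finset.sum_le_sum
  intro ω _
  by_cases hA : A ω
  · simp [hA, h ω hA]
  · by_cases hB : B ω <;> simp [hA, hB, hp ω]

lemma pr_false_of_imp {A : Ω → Prop} (h : ∀ ω, ¬ A ω) : pr p A = 0 :=
  Finset.sum_eq_zero fun ω _ => by simp [h ω]

lemma pr_total {S : Type*} [Fintype S] (X : Ω → S) (B : Ω → Prop) :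
    ∑ s, pr p (fun ω => B ω ∧ X ω = s) = pr p B := by
  unfold pr
  rw [Finset.sum_comm]
  refine Finset.sum_congr rfl fun ω _ => ?_
  by_cases hB : B ω <;> simp [hB]

lemma sum_pr_eq_one (hp : IsPMF p) {S : Type*} [Fintype S] (X : Ω → S) :
    ∑ s, pr p (fun ω => X ω = s) = 1 := by
  have h := pr_total (p := p) X (fun _ => True)
  simp only [true_and] at h
  rw [h]
  unfold pr
  simpa using hp.2

lemma pr_compl (hp : IsPMF p) (A : Ω → Prop) :
    pr p (fun ω => ¬ A ω) = 1 - pr p A := by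
  have : pr p A + pr p (fun ω => ¬ A ω) = 1 := by
    unfold pr
    rw [← Finset.sum_add_distrib, ← hp.2]
    refine Finset.sum_congr rfl fun ω _ => ?_
    by_cases h : A ω <;> simp [h]
  linarith

lemma pr_pair {S U : Type*} [Fintype S] [Fintype U] (X : Ω → S) (A : Ω → U)
    (Q : S → U → Prop) :
    pr p (fun ω => Q (X ω) (A ω)) =
      ∑ z : S × U, if Q z.1 z.2 then pr p (fun ω => X ω = z.1 ∧ A ω = z.2) else 0 := by
  have step1 : pr p (fun ω => Q (X ω) (A ω)) =
      ∑ z : S × U, pr p (fun ω => Q z.1 z.2 ∧ X ω = z.1 ∧ A ω = z.2) := by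
    unfold pr
    rw [Finset.sum_comm]
    refine Finset.sum_congr rfl fun ω _ => ?_
    refine Eq.trans ?_ (Finset.sum_eq_single (X ω, A ω) ?_ ?_).symm
    · by_cases h : Q (X ω) (A ω) <;> simp [h]
    · intro z _ hz
      apply if_neg
      rintro ⟨-, h1, h2⟩
      exact hz (by rw [h1, h2])
    · simp
  rw [step1]
  refine Finset.sum_congr rfl fun z _ => ?_
  by_cases h : Q z.1 z.2
  · rw [if_pos h]
    exact pr_congr fun ω => by tauto
  · rw [if_neg h]
    exact pr_false_of_imp fun ω hA => h hA.1

end Helpers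

section Entropy

lemma negMulLog_le_aux {q m : ℝ} (hq : 0 ≤ q) (hm : 0 < m) :
    Real.negMulLog q ≤ m - q - q * Real.log m := by
  rcases hq.eq_or_lt with h | h
  · rw [← h]
    simp [Real.negMulLog, hm.le]
  · have hlog := Real.log_le_sub_one_of_pos (div_pos hm h)
    rw [Real.log_div hm.ne' h.ne'] at hlog
    have h2 : q * (Real.log m - Real.log q) ≤ q * (m / q - 1) :=
      mul_le_mul_of_nonneg_left hlog h.le
    have h3 : q * (m / q) = m := by field_simp
    simp only [Real.negMulLog]
    nlinarith

lemma negMulLog_lt_aux {q m : ℝ} (hq : 0 ≤ q) (hm : 0 < m) (hne : q ≠ m) :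
    Real.negMulLog q < m - q - q * Real.log m := by
  rcases hq.eq_or_lt with h | h
  · rw [← h]
    simp [Real.negMulLog, hm]
  · have hne' : m / q ≠ 1 := by
      intro h1
      exact hne (by field_simp at h1; linarith)
    have hlog := Real.log_lt_sub_one_of_pos (div_pos hm h) hne'
    rw [Real.log_div hm.ne' h.ne'] at hlog
    have h2 : q * (Real.log m - Real.log q) < q * (m / q - 1) :=
      (mul_lt_mul_iff_right₀ h).mpr hlog
    have h3 : q * (m / q) = m := by field_simp
    simp only [Real.negMulLog]
    nlinarith

/-- Tangent-line sum computation. -/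
lemma tangent_sum {S : Type*} [Fintype S] [Nonempty S] (q : S → ℝ)
    (hc : 0 < ∑ s, q s) :
    ∑ s, ((∑ t, q t) / (Fintype.card S : ℝ) - q s
        - q s * Real.log ((∑ t, q t) / (Fintype.card S : ℝ)))
      = Real.negMulLog (∑ s, q s) + (∑ s, q s) * Real.log (Fintype.card S) := by
  have hn : (0 : ℝ) < (Fintype.card S : ℝ) := by
    exact_mod_cast Fintype.card_pos
  set c := ∑ s, q s with hc'
  rw [Real.log_div hc.ne' hn.ne']
  rw [Finset.sum_sub_distrib, Finset.sum_sub_distrib, ← Finset.sum_mul,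
    Finset.sum_const, Finset.card_univ, nsmul_eq_mul]
  simp only [Real.negMulLog, ← hc']
  field_simp
  ring

lemma sum_negMulLog_le {S : Type*} [Fintype S] [Nonempty S] (q : S → ℝ)
    (h0 : ∀ s, 0 ≤ q s) :
    ∑ s, Real.negMulLog (q s)
      ≤ Real.negMulLog (∑ s, q s) + (∑ s, q s) * Real.log (Fintype.card S) := by
  have hn : (0 : ℝ) < (Fintype.card S : ℝ) := by exact_mod_cast Fintype.card_pos
  rcases (Finset.sum_nonneg fun s _ => h0 s).eq_or_lt with hc | hc
  · have : ∀ s ∈ Finset.univ, q s = 0 :=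
      (Finset.sum_eq_zero_iff_of_nonneg fun s _ => h0 s).mp hc.symm
    simp only [Finset.mem_univ, forall_true_left] at this
    simp [this, Real.negMulLog]
  · calc ∑ s, Real.negMulLog (q s)
        ≤ ∑ s, ((∑ t, q t) / (Fintype.card S : ℝ) - q s
            - q s * Real.log ((∑ t, q t) / (Fintype.card S : ℝ))) :=
          Finset.sum_le_sum fun s _ => negMulLog_le_aux (h0 s) (div_pos hc hn)
      _ = _ := tangent_sum q hc

lemma uniform_of_sum_negMulLog_eq {S : Type*} [Fintype S] [Nonempty S] (q : S → ℝ)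
    (h0 : ∀ s, 0 ≤ q s)
    (heq : ∑ s, Real.negMulLog (q s)
      = Real.negMulLog (∑ s, q s) + (∑ s, q s) * Real.log (Fintype.card S)) :
    ∀ s, q s = (∑ t, q t) / (Fintype.card S : ℝ) := by
  have hn : (0 : ℝ) < (Fintype.card S : ℝ) := by exact_mod_cast Fintype.card_pos
  rcases (Finset.sum_nonneg fun s _ => h0 s : 0 ≤ ∑ s, q s).eq_or_lt with hc | hc
  · have h := (Finset.sum_eq_zero_iff_of_nonneg fun s _ => h0 s).mp hc.symm
    simp only [Finset.mem_univ, forall_true_left] at h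
    intro s
    rw [h s, ← hc]
    simp
  · have hm : 0 < (∑ t, q t) / (Fintype.card S : ℝ) := div_pos hc hn
    have hle : ∀ s ∈ Finset.univ, Real.negMulLog (q s)
        ≤ (∑ t, q t) / (Fintype.card S : ℝ) - q s
          - q s * Real.log ((∑ t, q t) / (Fintype.card S : ℝ)) :=
      fun s _ => negMulLog_le_aux (h0 s) hm
    have hsum : ∑ s, Real.negMulLog (q s)
        = ∑ s, ((∑ t, q t) / (Fintype.card S : ℝ) - q s
          - q s * Real.log ((∑ t, q t) / (Fintype.card S : ℝ))) := by
      rw [heq, tangent_sum q hc]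
    have := (Finset.sum_eq_sum_iff_of_le hle).mp hsum
    intro s
    by_contra hne
    exact absurd (this s (Finset.mem_univ s)) (negMulLog_lt_aux (h0 s) hm hne).ne

end Entropy

section Count

lemma card_hamming_ball {D α : ℕ} (a : Fin D → Bool) :
    (Finset.univ.filter fun x : Fin D → Bool => hammingDist x a ≤ α).card = Vball D α := by
  have hcard : (Finset.univ.filter fun x : Fin D → Bool => hammingDist x a ≤ α).card
      = (Finset.univ.filter fun s : Finset (Fin D) => s.card ≤ α).card := by
    apply Finset.card_bij (fun x _ => Finset.univ.filter fun i => x i ≠ a i)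
    · intro x hx
      simp only [Finset.mem_filter, Finset.mem_univ, true_and] at hx ⊢
      exact hx
    · intro x hx y hy hxy
      funext i
      have hi : (i ∈ Finset.univ.filter fun i => x i ≠ a i)
          ↔ (i ∈ Finset.univ.filter fun i => y i ≠ a i) := by rw [hxy]
      simp only [Finset.mem_filter, Finset.mem_univ, true_and] at hi
      cases h1 : x i <;> cases h2 : y i <;> cases h3 : a i <;> simp_all
    · intro s hs
      simp only [Finset.mem_filter, Finset.mem_univ, true_and] at hs
      refine ⟨fun i => if i ∈ s then !(a i) else a i, ?_, ?_⟩
      · simp only [Finset.mem_filter, Finset.mem_univ, true_and]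
        have : (Finset.univ.filter fun i =>
            (if i ∈ s then !(a i) else a i) ≠ a i) = s := by
          ext i
          by_cases h : i ∈ s <;> simp [h]
        calc hammingDist (fun i => if i ∈ s then !(a i) else a i) a
            = (Finset.univ.filter fun i =>
                (if i ∈ s then !(a i) else a i) ≠ a i).card := rfl
          _ = s.card := by rw [this]
          _ ≤ α := hs
      · ext i
        by_cases h : i ∈ s <;> simp [h]
  rw [hcard]
  have hsplit : (Finset.univ.filter fun s : Finset (Fin D) => s.card ≤ α)
      = (Finset.range (α + 1)).biUnion fun j => Finset.powersetCard j Finset.univ := by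
    ext s
    simp [Finset.mem_powersetCard, Nat.lt_succ_iff]
  rw [hsplit, Finset.card_biUnion]
  · unfold Vball
    refine Finset.sum_congr rfl fun j _ => ?_
    rw [Finset.card_powersetCard, Finset.card_univ, Fintype.card_fin]
  · intro i _ j _ hij
    simp only [Finset.disjoint_left]
    intro s hsi hsj
    rw [Finset.mem_powersetCard] at hsi hsj
    exact hij (hsi.2.symm.trans hsj.2)

lemma le_two_rpow {t : ℝ} (ht : 0 < t) : t ≤ (2 : ℝ) ^ t := by
  rcases le_or_gt t 1 with h | h
  · calc t ≤ 1 := h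
      _ ≤ (2 : ℝ) ^ t := Real.one_le_rpow one_le_two ht.le
  · have hu : Real.sqrt t ^ 2 = t := Real.sq_sqrt ht.le
    have hu1 : 1 ≤ Real.sqrt t := by
      rw [show (1:ℝ) = Real.sqrt 1 by simp]
      exact Real.sqrt_le_sqrt h.le
    have hlog : Real.log (Real.sqrt t) ≤ Real.sqrt t - 1 :=
      Real.log_le_sub_one_of_pos (by positivity)
    have hlt : Real.log t ≤ t * Real.log 2 := by
      have h2 : Real.log t = 2 * Real.log (Real.sqrt t) := by
        rw [Real.log_sqrt ht.le]; ring
      have hl2 : (0.6931471803 : ℝ) < Real.log 2 := Real.log_two_gt_d9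
      nlinarith [sq_nonneg (2 * Real.sqrt t - 3)]
    calc t = Real.exp (Real.log t) := (Real.exp_log ht).symm
      _ ≤ Real.exp (t * Real.log 2) := Real.exp_le_exp.mpr hlt
      _ = (2 : ℝ) ^ t := by
          rw [Real.rpow_def_of_pos (by norm_num : (0:ℝ) < 2)]
          ring_nf

end Count

/-- Example 1: under the hypotheses of the main theorem, with `I(X;Y) = 0` and `H(X) = D`,
for any `α` with `log₂ V(α) < D`, `p_α ≥ 1 - 1 / (D - log₂ V(α))`. -/
theorem stmt13 [Fintype Ω] {D : ℕ} {T : Type*} [Fintype T]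
    (p : Ω → ℝ) (hp : IsPMF p)
    (X : Ω → (Fin D → Bool)) (Y : Ω → T) (A : Ω → (Fin D → Bool))
    (hM : MarkovChain p X Y A) (α : ℕ) (hα : α < D)
    (hI : mutInf p X Y = 0) (hH : ent p X = D)
    (pα : ℝ) (hpα : pα = pr p (fun ω => α < hammingDist (X ω) (A ω)))
    (hD : Real.logb 2 (Vball D α) < D) :
    1 - 1 / ((D : ℝ) - Real.logb 2 (Vball D α)) ≤ pα := by
  have hl2 : (0 : ℝ) < Real.log 2 := Real.log_pos (by norm_num)
  set NR : ℝ := (Fintype.card (Fin D → Bool) : ℝ) with hNRdef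
  have hNR : NR = 2 ^ D := by
    rw [hNRdef]
    rw [Fintype.card_fun, Fintype.card_bool, Fintype.card_fin]
    push_cast
    ring
  have hNRpos : 0 < NR := by rw [hNR]; positivity
  have hlogNR : Real.log NR = D * Real.log 2 := by
    rw [hNR, Real.log_pow]
  -- Step 1: X is uniform
  have hsumX : ∑ x, pr p (fun ω => X ω = x) = 1 := sum_pr_eq_one hp X
  have hentX : ∑ x, Real.negMulLog (pr p (fun ω => X ω = x)) = D * Real.log 2 := by
    have h1 : ent p X * Real.log 2
        = ∑ x, Real.negMulLog (pr p (fun ω => X ω = x)) := by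
      unfold ent
      rw [← Finset.sum_div, div_mul_cancel₀ _ hl2.ne']
    rw [← h1, hH]
  have hX : ∀ x, pr p (fun ω => X ω = x) = 1 / NR := by
    have := uniform_of_sum_negMulLog_eq (fun x => pr p (fun ω => X ω = x))
      (fun x => pr_nonneg hp.1 _) ?_
    · intro x
      have h5 := this x
      beta_reduce at h5
      rw [h5, hsumX]
    · rw [hsumX, hentX, hlogNR]
      simp [Real.negMulLog]
  -- Step 2: joint distribution of (X, Y) factorizes
  have hJoint : ∑ z : (Fin D → Bool) × T, Real.negMulLog (pr p (fun ω => (X ω, Y ω) = z))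
      = D * Real.log 2 + ∑ y, Real.negMulLog (pr p (fun ω => Y ω = y)) := by
    have hmut : ent p (fun ω => (X ω, Y ω)) = ent p X + ent p Y := by
      unfold mutInf at hI
      linarith
    have h1 : ent p (fun ω => (X ω, Y ω)) * Real.log 2
        = ∑ z : (Fin D → Bool) × T, Real.negMulLog (pr p (fun ω => (X ω, Y ω) = z)) := by
      unfold ent
      rw [← Finset.sum_div, div_mul_cancel₀ _ hl2.ne']
    have h2 : ent p Y * Real.log 2
        = ∑ y, Real.negMulLog (pr p (fun ω => Y ω = y)) := by
      unfold ent
      rw [← Finset.sum_div, div_mul_cancel₀ _ hl2.ne']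
    rw [← h1, hmut, add_mul, h2, hH]
  have hmarg : ∀ y, ∑ x, pr p (fun ω => X ω = x ∧ Y ω = y) = pr p (fun ω => Y ω = y) := by
    intro y
    rw [← pr_total X (fun ω => Y ω = y)]
    exact Finset.sum_congr rfl fun x _ => pr_congr fun ω => and_comm
  have hsumY : ∑ y, pr p (fun ω => Y ω = y) = 1 := sum_pr_eq_one hp Y
  set F : T → ℝ := fun y => ∑ x, Real.negMulLog (pr p (fun ω => X ω = x ∧ Y ω = y)) with hF
  set G : T → ℝ := fun y =>
    Real.negMulLog (∑ x, pr p (fun ω => X ω = x ∧ Y ω = y))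
      + (∑ x, pr p (fun ω => X ω = x ∧ Y ω = y)) * Real.log NR with hG
  have hFG : ∀ y ∈ Finset.univ, F y ≤ G y :=
    fun y _ => sum_negMulLog_le _ (fun x => pr_nonneg hp.1 _)
  have hsumFG : ∑ y, F y = ∑ y, G y := by
    have h1 : ∑ y, F y
        = ∑ z : (Fin D → Bool) × T, Real.negMulLog (pr p (fun ω => (X ω, Y ω) = z)) := by
      rw [Fintype.sum_prod_type, Finset.sum_comm]
      exact Finset.sum_congr rfl fun y _ => Finset.sum_congr rfl fun x _ =>
        congrArg Real.negMulLog (pr_congr fun ω => by simp [Prod.ext_iff]).symm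
    have h2 : ∑ y, G y = ∑ y, Real.negMulLog (pr p (fun ω => Y ω = y)) + D * Real.log 2 := by
      rw [hG]
      simp only [hmarg]
      rw [Finset.sum_add_distrib, ← Finset.sum_mul, hsumY, one_mul, hlogNR]
    rw [h1, hJoint, h2]
    ring
  have heach := (Finset.sum_eq_sum_iff_of_le hFG).mp hsumFG
  have hXY : ∀ y x, pr p (fun ω => X ω = x ∧ Y ω = y) = pr p (fun ω => Y ω = y) / NR := by
    intro y x
    have := uniform_of_sum_negMulLog_eq (fun x => pr p (fun ω => X ω = x ∧ Y ω = y))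
      (fun x => pr_nonneg hp.1 _) (heach y (Finset.mem_univ y))
    have h5 := this x
    beta_reduce at h5
    rw [h5, hmarg y]
  -- Step 3: A is independent of X
  have hAX : ∀ (a : Fin D → Bool) (x : Fin D → Bool),
      pr p (fun ω => A ω = a ∧ X ω = x) = pr p (fun ω => A ω = a) / NR := by
    intro a x
    have hy : ∀ y, pr p (fun ω => A ω = a ∧ Y ω = y ∧ X ω = x)
        = pr p (fun ω => A ω = a ∧ Y ω = y) / NR := by
      intro y
      rcases (pr_nonneg hp.1 (fun ω => Y ω = y)).eq_or_lt with hPY | hPY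
      · have e1 : pr p (fun ω => A ω = a ∧ Y ω = y ∧ X ω = x) = 0 := by
          refine le_antisymm ?_ (pr_nonneg hp.1 _)
          calc pr p (fun ω => A ω = a ∧ Y ω = y ∧ X ω = x)
              ≤ pr p (fun ω => Y ω = y) := pr_mono hp.1 fun ω h => h.2.1
            _ = 0 := hPY.symm
        have e2 : pr p (fun ω => A ω = a ∧ Y ω = y) = 0 := by
          refine le_antisymm ?_ (pr_nonneg hp.1 _)
          calc pr p (fun ω => A ω = a ∧ Y ω = y)
              ≤ pr p (fun ω => Y ω = y) := pr_mono hp.1 fun ω h => h.2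
            _ = 0 := hPY.symm
        rw [e1, e2, zero_div]
      · have hxy : pr p (fun ω => X ω = x ∧ Y ω = y) = pr p (fun ω => Y ω = y) / NR :=
          hXY y x
        have hxypos : 0 < pr p (fun ω => X ω = x ∧ Y ω = y) := by
          rw [hxy]; positivity
        have hMeq := hM x y a hxypos
        rw [hxy] at hMeq
        field_simp at hMeq ⊢
        nlinarith [hMeq]
    have htot1 : ∑ y, pr p (fun ω => A ω = a ∧ Y ω = y ∧ X ω = x)
        = pr p (fun ω => A ω = a ∧ X ω = x) := by
      rw [← pr_total Y (fun ω => A ω = a ∧ X ω = x)]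
      exact Finset.sum_congr rfl fun y _ => pr_congr fun ω => by tauto
    have htot2 : ∑ y, pr p (fun ω => A ω = a ∧ Y ω = y)
        = pr p (fun ω => A ω = a) := pr_total Y (fun ω => A ω = a)
    calc pr p (fun ω => A ω = a ∧ X ω = x)
        = ∑ y, pr p (fun ω => A ω = a ∧ Y ω = y ∧ X ω = x) := htot1.symm
      _ = ∑ y, pr p (fun ω => A ω = a ∧ Y ω = y) / NR := Finset.sum_congr rfl fun y _ => hy y
      _ = (∑ y, pr p (fun ω => A ω = a ∧ Y ω = y)) / NR := by rw [Finset.sum_div]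
      _ = pr p (fun ω => A ω = a) / NR := by rw [htot2]
  -- Step 4: compute the probability of at most α errors
  have hsumA : ∑ a, pr p (fun ω => A ω = a) = 1 := sum_pr_eq_one hp A
  have hgood : pr p (fun ω => hammingDist (X ω) (A ω) ≤ α) = (Vball D α : ℝ) / NR := by
    rw [pr_pair X A (fun x a => hammingDist x a ≤ α)]
    have h1 : ∀ z : (Fin D → Bool) × (Fin D → Bool),
        pr p (fun ω => X ω = z.1 ∧ A ω = z.2) = pr p (fun ω => A ω = z.2) / NR := by
      intro z
      rw [pr_congr fun ω => (and_comm (a := X ω = z.1) (b := A ω = z.2)), hAX]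
    calc _ = ∑ z : (Fin D → Bool) × (Fin D → Bool),
          (if hammingDist z.1 z.2 ≤ α then pr p (fun ω => A ω = z.2) / NR else 0) := by
          refine Finset.sum_congr rfl fun z _ => ?_
          split_ifs with h
          · exact h1 z
          · rfl
      _ = ∑ a, ∑ x, (if hammingDist x a ≤ α then pr p (fun ω => A ω = a) / NR else 0) := by
          rw [Fintype.sum_prod_type_right]
      _ = ∑ a, (Vball D α : ℝ) * (pr p (fun ω => A ω = a) / NR) := by
          refine Finset.sum_congr rfl fun a _ => ?_
          rw [← Finset.sum_filter, Finset.sum_const, card_hamming_ball a, nsmul_eq_mul]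
      _ = (Vball D α : ℝ) / NR := by
          rw [← Finset.mul_sum, ← Finset.sum_div, hsumA]
          ring
  have hpα2 : pα = 1 - (Vball D α : ℝ) / NR := by
    rw [hpα, ← hgood, ← pr_compl hp]
    exact pr_congr fun ω => (not_le).symm
  -- Step 5: conclude
  set L : ℝ := Real.logb 2 (Vball D α) with hL
  have hVpos : (0 : ℝ) < (Vball D α : ℝ) := by
    have : 0 < Vball D α := by
      unfold Vball
      refine Finset.sum_pos' (fun j _ => Nat.zero_le _) ⟨0, Finset.mem_range.mpr ?_, ?_⟩
      · omega
      · simp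
    exact_mod_cast this
  have h2L : (2 : ℝ) ^ L = (Vball D α : ℝ) := Real.rpow_logb (by norm_num) (by norm_num) hVpos
  have ht : 0 < (D : ℝ) - L := by linarith
  have hfrac : (Vball D α : ℝ) / NR ≤ 1 / ((D : ℝ) - L) := by
    have hNRr : NR = (2 : ℝ) ^ ((D : ℝ) : ℝ) := by
      rw [hNR, ← Real.rpow_natCast]
    have m1 : (Vball D α : ℝ) / NR = (2 : ℝ) ^ (L - (D : ℝ)) := by
      rw [← h2L, hNRr, ← Real.rpow_sub (by norm_num)]
    rw [m1]
    have h2 : (D : ℝ) - L ≤ (2 : ℝ) ^ ((D : ℝ) - L) := le_two_rpow ht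
    have h3 : (2 : ℝ) ^ (L - (D : ℝ)) = ((2 : ℝ) ^ ((D : ℝ) - L))⁻¹ := by
      rw [← Real.rpow_neg (by norm_num)]
      ring_nf
    rw [h3, one_div]
    exact inv_anti₀ ht h2
  rw [hpα2]
  have : 1 / ((D : ℝ) - L) ≥ (Vball D α : ℝ) / NR := hfrac
  linarith
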